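/- Under snapshot-isolation semantics, if a cycle exists in the dependency graph and T_0 is the transaction in the cycle with the earliest commit time, then the edge into T_0 in the cycle is an RW edge from a transaction T_1 concurrent with T_0, and the edge into T_1 is also an RW edge from a transaction T_2 concurrent with T_1. -/
import Mathlib


inductive Lbl | WW | WR | RW
deriving DecidableEq

/-- Two transactions are concurrent if their intervals overlap. -/
def Concurrent {V : Type*} (start commit : V → ℝ) (i j : V) : Prop :=
  start i < commit j ∧ start j < commit i

/-- Under snapshot-isolation semantics, if a cycle exists and T₀ = f j is the
transaction in the cycle with the earliest commit time, then the edge into T₀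
is an RW edge from a transaction T₁ concurrent with T₀, and the edge into T₁
is also an RW edge from a transaction T₂ concurrent with T₁. -/
theorem stmt_4 {V : Type*} (E : V → V → Lbl → Prop)
    (start commit : V → ℝ)
    (hsc : ∀ T, start T < commit T)
    (hinj : Function.Injective commit)
    (hOther : ∀ i j l, E i j l → l ≠ Lbl.RW → commit i < start j)
    (hRW : ∀ i j, E i j Lbl.RW →
      start i < commit j ∧ Concurrent start commit i j)
    (n : ℕ) (hn : 0 < n) (f : ZMod n → V) (lbl : ZMod n → Lbl)
    (hcyc : ∀ i : ZMod n, E (f i) (f (i + 1)) (lbl i))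
    (j : ZMod n) (hmin : ∀ k : ZMod n, commit (f j) ≤ commit (f k)) :
    lbl (j - 1) = Lbl.RW ∧ Concurrent start commit (f (j - 1)) (f j) ∧
    lbl (j - 2) = Lbl.RW ∧ Concurrent start commit (f (j - 2)) (f (j - 1)) := by
  have h1 := hcyc (j - 1)
  rw [sub_add_cancel] at h1
  have h2 := hcyc (j - 2)
  have e2 : j - 2 + 1 = j - 1 := by ring
  rw [e2] at h2
  have hl1 : lbl (j - 1) = Lbl.RW := by
    by_contra h
    have := hOther _ _ _ h1 h
    exact absurd (lt_of_le_of_lt (hmin (j-1)) (this.trans (hsc (f j)))) (lt_irrefl _)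
  rw [hl1] at h1
  have hc1 := (hRW _ _ h1).2
  have hl2 : lbl (j - 2) = Lbl.RW := by
    by_contra h
    have := hOther _ _ _ h2 h
    exact absurd (lt_of_le_of_lt (hmin (j-2)) (this.trans hc1.1)) (lt_irrefl _)
  rw [hl2] at h2
  exact ⟨hl1, hc1, hl2, (hRW _ _ h2).2⟩
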